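/- arXiv:2506.05730 — 5 statements merged into one kernel-verified Lean document; each statement's English description precedes it below -/
import Mathlib

section
/- If N is a semi-binary tree-child network that admits a temporal labeling, then N is normal, i.e., N contains no 'short-cut' arc: there is no directed path v_1, ..., v_k with k > 2 such that (v_1, v_k) is also an arc of N. -/
/-- A semi-binary tree-child network admitting a temporal labeling is normal:
it has no short-cut arcs. -/
theorem stmt2 {V : Type*} [Fintype V] (A : V → V → Prop)
    -- rooted directed acyclic graph with a root reaching every vertex
    (root : V)
    (hacyc : ∀ v, ¬ Relation.TransGen A v v)
    (hrootin : Set.ncard {u | A u root} = 0)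
    (hreach : ∀ v, Relation.ReflTransGen A root v)
    (hind : ∀ v, v ≠ root → 1 ≤ Set.ncard {u | A u v})
    -- tree-child: every non-leaf vertex has a child of in-degree ≤ 1
    (htc : ∀ v, (∃ w, A v w) → ∃ w, A v w ∧ Set.ncard {u | A u w} ≤ 1)
    -- semi-binary: reticulate vertices have out-degree 1,
    -- non-leaf tree vertices have out-degree ≥ 2
    (hsepR : ∀ v, 2 ≤ Set.ncard {u | A u v} → Set.ncard {w | A v w} = 1)
    (hsepT : ∀ v, Set.ncard {u | A u v} ≤ 1 → (∃ w, A v w) →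
      2 ≤ Set.ncard {w | A v w})
    -- temporal labeling
    (r : V → ℝ)
    (hret : ∀ u v, A u v → 2 ≤ Set.ncard {w | A w v} → r u = r v)
    (htree : ∀ u v, A u v → Set.ncard {w | A w v} < 2 → r u < r v) :
    -- N is normal: no arc (u,w) with a directed path of length ≥ 2 from u to w
    ∀ u w, (∃ m, A u m ∧ Relation.TransGen A m w) → ¬ A u w := by
  classical
  -- r is monotone along arcs
  have mono : ∀ x y, A x y → r x ≤ r y := by
    intro x y hxy
    by_cases h : 2 ≤ Set.ncard {z | A z y}
    · exact le_of_eq (hret x y hxy h)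
    · exact le_of_lt (htree x y hxy (lt_of_not_ge h))
  have pmono : ∀ x y, Relation.ReflTransGen A x y → r x ≤ r y := by
    intro x y h
    induction h with
    | refl => exact le_refl _
    | tail _ hstep ih => exact le_trans ih (mono _ _ hstep)
  rintro u w ⟨m, hum, hmw⟩ hAuw
  obtain ⟨p, hmp, hpw⟩ := (Relation.TransGen.tail'_iff).mp hmw
  -- p ≠ u, otherwise a cycle through m
  have hpu : p ≠ u := by
    intro h
    subst h
    exact hacyc m ((Relation.TransGen.tail'_iff).mpr ⟨p, hmp, hum⟩)
  -- w is reticulate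
  have hwret : 2 ≤ Set.ncard {x | A x w} := by
    have hfin : ({x | A x w} : Set V).Finite := Set.toFinite _
    have : 1 < Set.ncard {x | A x w} :=
      Set.one_lt_ncard_iff hfin |>.mpr ⟨u, p, hAuw, hpw, fun h => hpu h.symm⟩
    omega
  have hru : r u = r w := hret u w hAuw hwret
  have hrp : r p = r w := hret p w hpw hwret
  -- p is not reticulate (else its unique child w would violate tree-child)
  have hp2 : Set.ncard {x | A x p} < 2 := by
    by_contra h
    push_neg at h
    have hout : Set.ncard {y | A p y} = 1 := hsepR p h
    obtain ⟨a, ha⟩ := Set.ncard_eq_one.mp hout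
    obtain ⟨c, hpc, hcdeg⟩ := htc p ⟨w, hpw⟩
    have hcw : c = w := by
      have h1 : c ∈ ({a} : Set V) := ha ▸ hpc
      have h2 : w ∈ ({a} : Set V) := ha ▸ hpw
      simp_all
    subst hcw
    omega
  -- derive r u < r p, contradicting r u = r w = r p
  have hlt : r u < r p := by
    rcases hmp.cases_tail with h | ⟨q, hmq, hqp⟩
    · subst h
      exact htree u p hum hp2
    · calc r u ≤ r m := mono u m hum
        _ ≤ r q := pmono m q hmq
        _ < r p := htree q p hqp hp2
  rw [hru, ← hrp] at hlt
  exact lt_irrefl _ hlt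
end

section
/- Let N be a separated tree-child network with at least one reticulate vertex, and let N' be obtained from N by contracting, for each reticulate vertex v with parents u_1, ..., u_k, all the arcs (u_1,v), ..., (u_k,v), identifying u_1, ..., u_k, v to a single vertex. If N' contains a directed cycle, then N admits no ranking. -/
/-- A vertex is reticulate if it has in-degree ≥ 2. -/
def IsRetic {V : Type*} (A : V → V → Prop) (v : V) : Prop :=
  2 ≤ Set.ncard {u | A u v}

/-- Two vertices are merged iff they are joined by a reticulation arc. -/
def MergeRel {V : Type*} (A : V → V → Prop) (u v : V) : Prop :=
  (A u v ∧ IsRetic A v) ∨ (A v u ∧ IsRetic A u)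

/-- The vertex set of the contracted graph: each reticulate vertex is
identified with all of its parents. -/
def ContrV {V : Type*} (A : V → V → Prop) : Type _ :=
  Quotient (Relation.EqvGen.setoid (MergeRel A))

/-- Arcs of the contracted graph: all arcs of `N` other than the contracted
reticulation arcs. -/
def ContrArc {V : Type*} (A : V → V → Prop) (x y : ContrV A) : Prop :=
  ∃ u v, Quotient.mk (Relation.EqvGen.setoid (MergeRel A)) u = x ∧
    Quotient.mk (Relation.EqvGen.setoid (MergeRel A)) v = y ∧ A u v ∧
    ¬ Relation.EqvGen (MergeRel A) u v

/-- If contracting every reticulate vertex of a separated tree-child network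
with its parents produces a directed cycle, then the network has no ranking. -/
theorem stmt9 {V : Type*} [Fintype V] (A : V → V → Prop) (root : V)
    (hacyc : ∀ v, ¬ Relation.TransGen A v v)
    (hrootin : Set.ncard {u | A u root} = 0)
    (hreach : ∀ v, Relation.ReflTransGen A root v)
    -- tree-child
    (htc : ∀ v, (∃ w, A v w) → ∃ w, A v w ∧ ¬ IsRetic A w)
    -- separated: reticulate vertices have out-degree 1
    (hsep : ∀ v, IsRetic A v → Set.ncard {w | A v w} = 1)
    -- at least one reticulate vertex
    (hone : ∃ v, IsRetic A v)
    -- the contracted graph has a directed cycle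
    (hcyc : ∃ x : ContrV A, Relation.TransGen (ContrArc A) x x) :
    ¬ ∃ r : V → ℕ, r root = 0 ∧
        (∀ u v, A u v → ¬ IsRetic A v → r u < r v) ∧
        (∀ u v, A u v → IsRetic A v → r u = r v) := by
  rintro ⟨r, -, hlt, heq⟩
  -- r is constant on MergeRel-equivalence classes
  have hconst : ∀ u v, Relation.EqvGen (MergeRel A) u v → r u = r v := by
    intro u v h
    induction h with
    | rel u v h =>
        rcases h with ⟨h1, h2⟩ | ⟨h1, h2⟩
        · exact heq u v h1 h2
        · exact (heq v u h1 h2).symm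
    | refl => rfl
    | symm _ _ _ ih => exact ih.symm
    | trans _ _ _ _ _ ih1 ih2 => exact ih1.trans ih2
  -- descend to the quotient
  let r' : ContrV A → ℕ := Quotient.lift r (fun u v h => hconst u v h)
  have harc : ∀ x y, ContrArc A x y → r' x < r' y := by
    rintro x y ⟨u, v, hu, hv, hauv, hne⟩
    have hnr : ¬ IsRetic A v := fun hr => hne (Relation.EqvGen.rel _ _ (Or.inl ⟨hauv, hr⟩))
    have := hlt u v hauv hnr
    rw [← hu, ← hv]
    exact this
  obtain ⟨x, hx⟩ := hcyc
  have : r' x < r' x := by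
    have : ∀ y, Relation.TransGen (ContrArc A) x y → r' x < r' y := by
      intro y hy
      induction hy with
      | single h => exact harc _ _ h
      | tail _ h ih => exact ih.trans (harc _ _ h)
    exact this x hx
  exact lt_irrefl _ this
end

section
/- For fixed k ≥ 0, as n → ∞ the unsigned Stirling number of the first kind satisfies the asymptotic equivalence [n−1 choose-cycles n−1−k] ∼ (n−1−k)^{2k} / (2^k · k!), i.e., the ratio of the two sides tends to 1. -/
open Filter

open Finset

/-- The unsigned Stirling numbers of the first kind: `stirling1 m j` is the
number of permutations of an `m`-element set with exactly `j` cycles. -/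
def stirling1 : ℕ → ℕ → ℕ
  | 0, 0 => 1
  | 0, _ + 1 => 0
  | _ + 1, 0 => 0
  | m + 1, j + 1 => stirling1 m j + m * stirling1 m (j + 1)

lemma stirling1_eq_zero : ∀ m j, m < j → stirling1 m j = 0
  | 0, j+1, _ => rfl
  | m+1, j+1, h => by
      rw [stirling1, stirling1_eq_zero m j (by omega), stirling1_eq_zero m (j+1) (by omega)]
      ring

lemma stirling1_diag : ∀ m, stirling1 m m = 1
  | 0 => rfl
  | m+1 => by
      rw [stirling1, stirling1_diag m, stirling1_eq_zero m (m+1) (by omega)]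
      ring

lemma aux_ratio (a b : ℝ) :
    Tendsto (fun m : ℕ => ((m : ℝ) + a) / ((m : ℝ) + b)) atTop (nhds 1) := by
  have h1 : Tendsto (fun m : ℕ => 1 + a / (m:ℝ)) atTop (nhds 1) := by
    simpa using tendsto_const_nhds.add (tendsto_const_div_atTop_nhds_zero_nat a)
  have h2 : Tendsto (fun m : ℕ => 1 + b / (m:ℝ)) atTop (nhds 1) := by
    simpa using tendsto_const_nhds.add (tendsto_const_div_atTop_nhds_zero_nat b)
  have := h1.div h2 one_ne_zero
  rw [div_one] at this
  apply this.congr'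
  filter_upwards [eventually_gt_atTop 0] with m hm
  have hm' : (m:ℝ) ≠ 0 := Nat.cast_ne_zero.mpr hm.ne'
  rw [Pi.div_apply, one_add_div hm', one_add_div hm', div_div_div_cancel_right₀ hm']

lemma aux_g (p : ℕ) :
    Tendsto (fun m : ℕ => (((m:ℝ) + 1) ^ p - (m:ℝ) ^ p) / (m:ℝ) ^ (p - 1))
      atTop (nhds p) := by
  have hsum : Tendsto (fun m : ℕ => ∑ i ∈ range p, (((m:ℝ)+1)/(m:ℝ))^i) atTop (nhds p) := by
    have h := tendsto_finset_sum (α := ℕ) (range p)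
      (fun i (_ : i ∈ range p) =>
        (((aux_ratio 1 0).congr (fun m => by rw [add_zero])).pow i :
          Tendsto (fun m : ℕ => (((m:ℝ)+1)/(m:ℝ))^i) atTop (nhds (1^i))))
    simpa using h
  apply hsum.congr'
  filter_upwards [eventually_gt_atTop 0] with m hm
  have hm' : (m:ℝ) ≠ 0 := Nat.cast_ne_zero.mpr hm.ne'
  have key : (((m:ℝ)+1) ^ p - (m:ℝ) ^ p)
      = (∑ i ∈ range p, ((m:ℝ)+1)^i * (m:ℝ)^(p-1-i)) := by
    have := geom_sum₂_mul ((m:ℝ)+1) (m:ℝ) p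
    simp at this
    linarith [this]
  rw [key, Finset.sum_div]
  refine Finset.sum_congr rfl fun i hi => ?_
  have hip : i + (p - 1 - i) = p - 1 := by
    have := Finset.mem_range.mp hi; omega
  have hpow : (m:ℝ)^(p-1) = (m:ℝ)^i * (m:ℝ)^(p-1-i) := by
    rw [← pow_add, hip]
  rw [div_pow, hpow, mul_div_mul_comm, div_self (pow_ne_zero _ hm'), mul_one]

lemma main_lim : ∀ k : ℕ, Tendsto (fun m : ℕ =>
      (stirling1 m (m - k) : ℝ) / (m:ℝ) ^ (2 * k))
    atTop (nhds (1 / (2 ^ k * (k.factorial : ℝ))))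
  | 0 => by
      simp [stirling1_diag]
  | k+1 => by
      have ih := main_lim k
      set p := 2 * (k + 1) with hp
      set c : ℝ := 1 / (2 ^ k * (k.factorial : ℝ)) with hcdef
      set c' : ℝ := 1 / (2 ^ (k+1) * ((k+1).factorial : ℝ)) with hc'def
      have hfac : ((k+1).factorial : ℝ) = (k+1) * k.factorial := by
        rw [Nat.factorial_succ]; push_cast; ring
      have hfacpos : (0:ℝ) < k.factorial := by positivity
      have hc : c = c' * (2 * ((k:ℝ) + 1)) := by
        rw [hcdef, hc'def, hfac]
        field_simp
        ring
      set d : ℕ → ℝ := fun m =>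
        (stirling1 (m+1) (m+1 - (k+1)) : ℝ) - (stirling1 m (m - (k+1)) : ℝ) with hd
      set g : ℕ → ℝ := fun m => ((m:ℝ)+1)^p - (m:ℝ)^p with hg
      set e : ℕ → ℝ := fun m => d m - c' * g m with he
      have h_d : ∀ m, k + 1 ≤ m → d m = (m:ℝ) * (stirling1 m (m - k) : ℝ) := by
        intro m hm
        have h1 : m + 1 - (k+1) = (m - (k+1)) + 1 := by omega
        have h2 : m - k = (m - (k+1)) + 1 := by omega
        simp only [hd, h1, h2, stirling1]
        push_cast
        ring
      -- e m / m^(2k+1) → 0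
      have hgcast : ((p:ℕ):ℝ) = 2 * ((k:ℝ) + 1) := by rw [hp]; push_cast; ring
      have h_e0 : Tendsto (fun m : ℕ => e m / (m:ℝ)^(2*k+1)) atTop (nhds 0) := by
        have hag := aux_g p
        rw [hgcast] at hag
        have hcomb := ih.sub (hag.const_mul c')
        rw [show c - c' * (2 * ((k:ℝ)+1)) = 0 by rw [hc]; ring] at hcomb
        apply hcomb.congr'
        filter_upwards [eventually_ge_atTop (k+1)] with m hm
        have hm1 : 1 ≤ m := by omega
        have hm' : (m:ℝ) ≠ 0 := Nat.cast_ne_zero.mpr (by omega)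
        have hpm1 : p - 1 = 2*k+1 := by omega
        rw [eq_comm]
        show (d m - c' * g m) / (m:ℝ)^(2*k+1) = _
        rw [h_d m hm, sub_div]
        congr 1
        · rw [pow_succ]
          field_simp
        · show c' * (((m:ℝ)+1)^p - (m:ℝ)^p) / (m:ℝ)^(2*k+1) = _
          rw [← hpm1, mul_div_assoc]
      have h_littleo : e =o[atTop] g := by
        have h1 : e =o[atTop] (fun m : ℕ => (m:ℝ)^(2*k+1)) := by
          rw [Asymptotics.isLittleO_iff_tendsto']
          · exact h_e0
          · filter_upwards [eventually_ge_atTop 1] with m hm h0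
            exact absurd h0 (pow_ne_zero _ (Nat.cast_ne_zero.mpr (by omega)))
        have h2 : (fun m : ℕ => (m:ℝ)^(2*k+1)) =O[atTop] g := by
          apply Asymptotics.IsBigO.of_bound 1
          filter_upwards [eventually_ge_atTop 1] with m hm
          have hm0 : (0:ℝ) ≤ m := Nat.cast_nonneg m
          have hkey : (m:ℝ)^(2*k+1) + (m:ℝ)^p ≤ ((m:ℝ)+1)^p := by
            have h3 : (m:ℝ)^(p-1) * ((m:ℝ)+1) ≤ ((m:ℝ)+1)^(p-1) * ((m:ℝ)+1) := by
              gcongr <;> linarith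
            have h4 : ((m:ℝ)+1)^(p-1) * ((m:ℝ)+1) = ((m:ℝ)+1)^p := by
              rw [← pow_succ, show p - 1 + 1 = p from by omega]
            have h5 : (m:ℝ)^(p-1) * ((m:ℝ)+1) = (m:ℝ)^p + (m:ℝ)^(p-1) := by
              rw [mul_add, mul_one, ← pow_succ, show p - 1 + 1 = p from by omega]
            have hpm1 : p - 1 = 2*k+1 := by omega
            rw [hpm1] at h3 h5 h4
            linarith
          have hgnn : (0:ℝ) ≤ g m := by
            have : (m:ℝ)^(2*k+1) ≥ 0 := by positivity
            simp only [hg]; linarith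
          rw [Real.norm_eq_abs, Real.norm_eq_abs, abs_of_nonneg (by positivity), abs_of_nonneg hgnn,
            one_mul]
          simp only [hg]
          linarith
        exact h1.trans_isBigO h2
      have hg_nonneg : ∀ m, 0 ≤ g m := by
        intro m
        simp only [hg, sub_nonneg]
        have h0 : (0:ℝ) ≤ m := Nat.cast_nonneg m
        gcongr <;> linarith
      have hg_sum : ∀ n : ℕ, ∑ m ∈ range n, g m = (n:ℝ)^p := by
        intro n
        have := Finset.sum_range_sub (fun m : ℕ => (m:ℝ)^p) n
        rw [show (fun m => g m) = fun m => ((m+1:ℕ):ℝ)^p - ((m:ℕ):ℝ)^p by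
          funext m; simp only [hg]; push_cast; ring]
        rw [this]
        simp [hp]
      have hsum_tendsto : Tendsto (fun n : ℕ => ∑ m ∈ range n, g m) atTop atTop := by
        simp only [hg_sum]
        exact (tendsto_pow_atTop (by omega : p ≠ 0)).comp tendsto_natCast_atTop_atTop
      have hEo := (h_littleo.sum_range hg_nonneg hsum_tendsto)
      have hEo' : (fun n : ℕ => ∑ m ∈ range n, e m) =o[atTop] (fun n : ℕ => (n:ℝ)^p) := by
        apply hEo.congr (fun n => rfl) hg_sum
      have hdiv : Tendsto (fun n : ℕ => (∑ m ∈ range n, e m) / (n:ℝ)^p) atTop (nhds 0) :=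
        hEo'.tendsto_div_nhds_zero
      have hT : ∀ n : ℕ, (stirling1 n (n - (k+1)) : ℝ) = 1 + ∑ m ∈ range n, d m := by
        intro n
        have := Finset.sum_range_sub (fun m : ℕ => (stirling1 m (m - (k+1)) : ℝ)) n
        rw [show (fun m => d m) = fun m => (stirling1 (m+1) (m+1-(k+1)) : ℝ)
          - (stirling1 m (m-(k+1)) : ℝ) from rfl, this]
        have : (0:ℕ) - (k+1) = 0 := by omega
        rw [this]
        show _ = 1 + (_ - (stirling1 0 0 : ℝ))
        simp [stirling1]
      have hpInf : Tendsto (fun n : ℕ => (n:ℝ)^p) atTop atTop :=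
        (tendsto_pow_atTop (by omega : p ≠ 0)).comp tendsto_natCast_atTop_atTop
      have hinv : Tendsto (fun n : ℕ => ((n:ℝ)^p)⁻¹) atTop (nhds 0) :=
        hpInf.inv_tendsto_atTop
      have final := hinv.add (hdiv.add (tendsto_const_nhds (α := ℕ) (x := c')))
      rw [show (0:ℝ) + (0 + c') = c' by ring] at final
      apply final.congr'
      filter_upwards [eventually_ge_atTop 1] with n hn
      have hn' : (n:ℝ)^p ≠ 0 := pow_ne_zero _ (Nat.cast_ne_zero.mpr (by omega))
      have hsd : ∑ m ∈ range n, d m = (∑ m ∈ range n, e m) + c' * (n:ℝ)^p := by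
        rw [← hg_sum n, Finset.mul_sum, ← Finset.sum_add_distrib]
        refine Finset.sum_congr rfl fun m _ => ?_
        show d m = (d m - c' * g m) + c' * g m
        ring
      show ((n:ℝ)^p)⁻¹ + ((∑ m ∈ range n, e m) / (n:ℝ)^p + c')
          = (stirling1 n (n - (k+1)) : ℝ) / (n:ℝ)^(2*(k+1))
      rw [hT n, hsd, ← hp]
      field_simp

/-- For fixed `k`, `[n-1, n-1-k] ∼ (n-1-k)^(2k) / (2^k k!)` as `n → ∞`. -/
theorem stmt13 (k : ℕ) :
    Tendsto (fun n : ℕ =>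
        (stirling1 (n - 1) (n - 1 - k) : ℝ) /
          (((n : ℝ) - 1 - k) ^ (2 * k) / (2 ^ k * (k.factorial : ℝ))))
      atTop (nhds 1) := by
  set D : ℝ := 2 ^ k * (k.factorial : ℝ) with hD
  have hDpos : (0:ℝ) < D := by positivity
  have hF : Tendsto (fun m : ℕ =>
      (stirling1 m (m - k) : ℝ) / (((m:ℝ) - k) ^ (2 * k) / D)) atTop (nhds 1) := by
    have hr : Tendsto (fun m : ℕ => ((m:ℝ)/((m:ℝ) - k))^(2*k)) atTop (nhds 1) := by
      have := (aux_ratio 0 (-(k:ℝ))).pow (2*k)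
      simp only [add_zero, one_pow] at this
      exact this.congr (fun m => by rw [← sub_eq_add_neg])
    have h := ((main_lim k).mul hr).mul_const D
    rw [show 1 / (2 ^ k * (k.factorial : ℝ)) * 1 * D = 1 by
      rw [hD]; field_simp] at h
    apply h.congr'
    filter_upwards [eventually_ge_atTop (k+1)] with m hm
    have hm0 : (m:ℝ) ≠ 0 := Nat.cast_ne_zero.mpr (by omega)
    have hmk : (m:ℝ) - k ≠ 0 := by
      have : (k:ℝ) + 1 ≤ m := by exact_mod_cast hm
      linarith
    rw [div_pow]
    field_simp
  have hcomp := hF.comp (tendsto_sub_atTop_nat 1)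
  apply hcomp.congr'
  filter_upwards [eventually_ge_atTop 1] with n hn
  have : ((n - 1 : ℕ) : ℝ) = (n:ℝ) - 1 := by
    have : (1:ℕ) ≤ n := hn
    push_cast [Nat.cast_sub this]
    ring
  simp only [Function.comp_apply, this]
end

section
/- Let N be a rooted directed acyclic graph with a temporal labeling r (constant on reticulation arcs, strictly increasing on tree arcs, where an arc is a reticulation arc iff its head has in-degree ≥ 2). If (v_1, v_k) is an arc of N and there is a directed path v_1, v_2, ..., v_k with k ≥ 3 in which every vertex has at least one child of in-degree 1 (tree-child condition at each internal vertex), and every vertex of in-degree ≥ 2 has out-degree 1, then a contradiction follows; that is, no such configuration exists. -/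
set_option maxHeartbeats 1000000 in
/-- Core step of the normality proof: in a DAG with a temporal labeling in
which every internal vertex has a tree-vertex child (tree-child) and every
reticulate vertex has out-degree 1 (separated), there is no arc `(v_1, v_k)`
together with a directed path `v_1, v_2, …, v_k` with `k ≥ 3`. -/
theorem stmt17 {V : Type*} [Fintype V] (A : V → V → Prop)
    (hacyc : ∀ v, ¬ Relation.TransGen A v v)
    -- temporal labeling: constant on reticulation arcs, increasing on tree arcs
    (r : V → ℝ)
    (hret : ∀ u v, A u v → 2 ≤ Set.ncard {w | A w v} → r u = r v)
    (htree : ∀ u v, A u v → Set.ncard {w | A w v} < 2 → r u < r v)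
    -- tree-child condition at each internal vertex
    (htc : ∀ v, (∃ w, A v w) → ∃ w, A v w ∧ Set.ncard {u | A u w} ≤ 1)
    -- every vertex of in-degree ≥ 2 has out-degree 1
    (hsep : ∀ v, 2 ≤ Set.ncard {u | A u v} → Set.ncard {w | A v w} = 1)
    -- a directed path v_1, …, v_k with k ≥ 3 and a short-cut arc (v_1, v_k)
    (k : ℕ) (hk : 3 ≤ k) (p : Fin k → V)
    (hpath : ∀ i : ℕ, (h : i + 1 < k) → A (p ⟨i, by omega⟩) (p ⟨i + 1, h⟩))
    (hshort : A (p ⟨0, by omega⟩) (p ⟨k - 1, by omega⟩)) :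
    False := by
  obtain ⟨m, rfl⟩ : ∃ m, k = m + 3 := ⟨k - 3, by omega⟩
  -- monotonicity of r along arcs
  have hmono : ∀ u v, A u v → r u ≤ r v := by
    intro u v h
    rcases lt_or_ge (Set.ncard {w | A w v}) 2 with hc | hc
    · exact (htree u v h hc).le
    · exact (hret u v h hc).le
  -- r (p 0) ≤ r (p i)
  have hle : ∀ i : ℕ, (h : i < m + 3) → r (p ⟨0, by omega⟩) ≤ r (p ⟨i, h⟩) := by
    intro i
    induction i with
    | zero => intro h; exact le_refl _
    | succ n ih =>
      intro h
      exact le_trans (ih (by omega)) (hmono _ _ (hpath n h))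
  -- transitive gen from p 0 to p (i+1)
  have htg : ∀ i : ℕ, (h : i + 1 < m + 3) →
      Relation.TransGen A (p ⟨0, by omega⟩) (p ⟨i + 1, h⟩) := by
    intro i
    induction i with
    | zero => intro h; exact Relation.TransGen.single (hpath 0 h)
    | succ n ih =>
      intro h
      exact Relation.TransGen.tail (ih (by omega)) (hpath (n + 1) h)
  -- p 0 ≠ p (m+1)
  have hne : p ⟨0, by omega⟩ ≠ p ⟨m + 1, by omega⟩ := by
    intro heq
    have h := htg m (by omega)
    rw [heq] at h
    exact hacyc _ h
  -- arcs
  have harc1 : A (p ⟨m + 1, by omega⟩) (p ⟨m + 2, by omega⟩) := hpath (m + 1) (by omega)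
  have harc0 : A (p ⟨m, by omega⟩) (p ⟨m + 1, by omega⟩) := hpath m (by omega)
  have hshort' : A (p ⟨0, by omega⟩) (p ⟨m + 2, by omega⟩) := hshort
  -- p (m+2) is reticulate
  have hcard : 2 ≤ Set.ncard {w | A w (p ⟨m + 2, by omega⟩)} := by
    have hsub : {p ⟨0, by omega⟩, p ⟨m + 1, by omega⟩} ⊆
        {w | A w (p ⟨m + 2, by omega⟩)} := by
      intro x hx
      rcases hx with hx | hx
      · subst hx; exact hshort'
      · simp only [Set.mem_singleton_iff] at hx; subst hx; exact harc1
    calc 2 = Set.ncard {p ⟨0, by omega⟩, p ⟨m + 1, by omega⟩} :=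
          (Set.ncard_pair hne).symm
      _ ≤ _ := Set.ncard_le_ncard hsub (Set.toFinite _)
  -- p (m+1) is a tree vertex
  have htv : Set.ncard {u | A u (p ⟨m + 1, by omega⟩)} < 2 := by
    by_contra hcon
    push_neg at hcon
    have hout := hsep _ hcon
    obtain ⟨a, ha⟩ := Set.ncard_eq_one.mp hout
    have h1 : p ⟨m + 2, by omega⟩ ∈ {w | A (p ⟨m + 1, by omega⟩) w} := harc1
    rw [ha] at h1
    obtain ⟨w, hw, hwcard⟩ := htc _ ⟨_, harc1⟩
    have h2 : w ∈ {w | A (p ⟨m + 1, by omega⟩) w} := hw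
    rw [ha] at h2
    simp only [Set.mem_singleton_iff] at h1 h2
    rw [h2, ← h1] at hwcard
    omega
  -- assemble the contradiction
  have hA : r (p ⟨m, by omega⟩) < r (p ⟨m + 1, by omega⟩) :=
    htree _ _ harc0 htv
  have hB : r (p ⟨m + 1, by omega⟩) = r (p ⟨m + 2, by omega⟩) :=
    hret _ _ harc1 hcard
  have hC : r (p ⟨0, by omega⟩) = r (p ⟨m + 2, by omega⟩) :=
    hret _ _ hshort' hcard
  have hD : r (p ⟨0, by omega⟩) ≤ r (p ⟨m, by omega⟩) := hle m (by omega)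
  linarith
end

section
/- There exists a non-binary (i.e., not separated) tree-child network that admits a temporal labeling but is not normal. Concretely: a tree-child network containing a reticulate vertex v of out-degree 2 whose children include a leaf and another reticulate vertex t, with an arc (u, t) that is a short-cut, can admit a temporal labeling. -/
def A14 : Fin 14 → Fin 14 → Prop := fun u v =>
  (u.val, v.val) ∈ [(0,1),(0,2),(0,3),(0,4),(1,5),(2,5),(3,6),(4,6),
    (3,7),(6,7),(5,7),(5,8),(3,9),(6,10),(1,11),(2,12),(4,13)]

instance : DecidableRel A14 := fun u v => by unfold A14; infer_instance

def rn : Fin 14 → ℕ := fun v => if v.val = 0 then 0 else if v.val ≤ 7 then 1 else 2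

lemma A14_lt : ∀ u v : Fin 14, A14 u v → u < v := by decide

lemma A14_trans_lt : ∀ u v : Fin 14, Relation.TransGen A14 u v → u < v := by
  intro u v h
  induction h with
  | single h => exact A14_lt _ _ h
  | tail _ h ih => exact lt_trans ih (A14_lt _ _ h)

lemma hin (v : Fin 14) :
    Set.ncard {u | A14 u v} = (Finset.univ.filter (fun u => A14 u v)).card := by
  rw [Set.ncard_eq_toFinset_card']
  simp [Set.toFinset_setOf]

lemma hout (v : Fin 14) :
    Set.ncard {w | A14 v w} = (Finset.univ.filter (fun w => A14 v w)).card := by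
  rw [Set.ncard_eq_toFinset_card']
  simp [Set.toFinset_setOf]

lemma temp_eq : ∀ u v : Fin 14, A14 u v →
    2 ≤ (Finset.univ.filter (fun w => A14 w v)).card → rn u = rn v := by decide

lemma temp_lt : ∀ u v : Fin 14, A14 u v →
    (Finset.univ.filter (fun w => A14 w v)).card < 2 → rn u < rn v := by decide

lemma tc : ∀ v : Fin 14, (∃ w, A14 v w) →
    ∃ w, A14 v w ∧ (Finset.univ.filter (fun u => A14 u w)).card ≤ 1 := by decide

/-- There exists a non-separated (non-binary) tree-child network that admits a
temporal labeling but is not normal: it has a reticulate vertex of out-degree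
2 whose children include a leaf and another reticulate vertex `t`, with a
short-cut arc ending at `t`. -/
theorem stmt18 :
    ∃ (V : Type) (_ : Fintype V) (A : V → V → Prop) (root : V),
      -- rooted directed acyclic graph
      (∀ v, ¬ Relation.TransGen A v v) ∧
      Set.ncard {u | A u root} = 0 ∧
      (∀ v, Relation.ReflTransGen A root v) ∧
      -- tree-child: every non-leaf vertex has a child that is a tree vertex
      (∀ v, (∃ w, A v w) → ∃ w, A v w ∧ Set.ncard {u | A u w} ≤ 1) ∧
      -- non-separated: some reticulate vertex has out-degree 2, with a leaf
      -- child and a reticulate child t which is the head of a short-cut arc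
      (∃ v t leaf, 2 ≤ Set.ncard {u | A u v} ∧ Set.ncard {w | A v w} = 2 ∧
        A v leaf ∧ ¬ (∃ w, A leaf w) ∧
        A v t ∧ 2 ≤ Set.ncard {u | A u t} ∧
        ∃ u, A u t ∧ ∃ m, A u m ∧ Relation.TransGen A m t) ∧
      -- not normal: there is a short-cut arc
      (∃ u w, A u w ∧ ∃ m, A u m ∧ Relation.TransGen A m w) ∧
      -- yet N admits a temporal labeling
      (∃ r : V → ℝ,
        (∀ u v, A u v → 2 ≤ Set.ncard {w | A w v} → r u = r v) ∧
        (∀ u v, A u v → Set.ncard {w | A w v} < 2 → r u < r v)) := by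
  refine ⟨Fin 14, inferInstance, A14, 0, ?_, ?_, ?_, ?_, ?_, ?_, ?_⟩
  · intro v h
    exact lt_irrefl v (A14_trans_lt v v h)
  · rw [hin]; decide
  · intro v
    fin_cases v
    · exact .refl
    · exact .tail .refl (by decide)
    · exact .tail .refl (by decide)
    · exact .tail .refl (by decide)
    · exact .tail .refl (by decide)
    · exact .tail (.tail .refl (by decide : A14 0 1)) (by decide)
    · exact .tail (.tail .refl (by decide : A14 0 3)) (by decide)
    · exact .tail (.tail .refl (by decide : A14 0 3)) (by decide)
    · exact .tail (.tail (.tail .refl (by decide : A14 0 1)) (by decide : A14 1 5)) (by decide)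
    · exact .tail (.tail .refl (by decide : A14 0 3)) (by decide)
    · exact Relation.ReflTransGen.tail (.tail (.tail .refl (by decide : A14 0 3)) (by decide : A14 3 6)) (by decide)
    · exact .tail (.tail .refl (by decide : A14 0 1)) (by decide)
    · exact .tail (.tail .refl (by decide : A14 0 2)) (by decide)
    · exact .tail (.tail .refl (by decide : A14 0 4)) (by decide)
  · simp only [hin]
    exact tc
  · refine ⟨5, 7, 8, ?_, ?_, by decide, by decide, by decide, ?_, 3, by decide, 6, by decide,
      Relation.TransGen.single (by decide)⟩
    · rw [hin]; decide
    · rw [hout]; decide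
    · rw [hin]; decide
  · exact ⟨3, 7, by decide, 6, by decide, Relation.TransGen.single (by decide)⟩
  · refine ⟨fun v => (rn v : ℝ), ?_, ?_⟩
    · intro u v h h2
      rw [hin] at h2
      show (rn u : ℝ) = rn v
      exact_mod_cast temp_eq u v h h2
    · intro u v h h2
      rw [hin] at h2
      show (rn u : ℝ) < rn v
      exact_mod_cast temp_lt u v h h2
end
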